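/- The closure $\overline{T} = T^{**}$ of $T$ has domain $D(\overline{T}) = \{ f \in D(T^*) : \text{for every } n \in \mathbb{N}, \text{ the } n\text{-th section } P_n f \text{ belongs to the domain of the closure of } J_n \}$, where $(P_n f)(m) := f(m,n)$ is regarded as an element of $\ell^2(\mathbb{N};\mathbb{C})$; and $\overline{T} f = T^* f$ for $f$ in this domain. -/

import Mathlib

noncomputable section

/-- The Hilbert space `ℓ²(ℕ; ℂ)`. -/
abbrev H1 : Type := lp (fun _ : ℕ => ℂ) 2

/-- The Hilbert space `ℓ²(ℕ×ℕ; ℂ)`. -/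
abbrev H2 : Type := lp (fun _ : ℕ × ℕ => ℂ) 2

/-- `β(m,n) = (1/2)·√(m+1)·(1-m-n)`. -/
def beta (m n : ℕ) : ℝ := (1 / 2) * Real.sqrt ((m : ℝ) + 1) * (1 - (m : ℝ) - (n : ℝ))

/-- The formal Jacobi-type action on doubly indexed sequences, with `β(-1,n) = 0`. -/
def jacobiAct (g : ℕ × ℕ → ℂ) : ℕ × ℕ → ℂ := fun p =>
  (beta p.1 p.2 : ℂ) * g (p.1 + 1, p.2) +
    (if p.1 = 0 then 0 else (beta (p.1 - 1) p.2 : ℂ) * g (p.1 - 1, p.2))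

/-- The formal Jacobi action in the row `n`, with `β(-1,n) = 0`. -/
def jacobiActRow (n : ℕ) (u : ℕ → ℂ) : ℕ → ℂ := fun m =>
  (beta m n : ℂ) * u (m + 1) +
    (if m = 0 then 0 else (beta (m - 1) n : ℂ) * u (m - 1))

/-!
`T` is symmetric: on the basis vectors `e_q` one computes `⟪T e_q, y⟫ = (jacobiAct y) q`, and the
domain of `T` is spanned by them. Hence `T` is closable with `T̄ ≤ T*`, and the same computation
shows that `T*` acts by the formal Jacobi action. The row section `Pₙ` maps the graph of `T` into
that of `Jₙ`, and extension by zero `Eₙ` maps the graph of `Jₙ` into that of `T`; by continuity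
the same holds for the closures (so `Jₙ` is closable, `Eₙ` being injective), which gives one
inclusion. Conversely, let `f ∈ D(T*)` with every `Pₙ f ∈ D(J̄ₙ)`. Then `(Eₙ Pₙ f, Eₙ J̄ₙ Pₙ f)`
lies in the graph of `T̄ ≤ T*`, and since the Jacobi action does not mix rows,
`Eₙ J̄ₙ Pₙ f = Eₙ Pₙ T* f`. Summing over `n`, the closed graph of `T̄` contains `(f, T* f)`.
-/

open scoped ENNReal InnerProductSpace

theorem Submodule.mem_of_hasSum {R M ι : Type*} [Semiring R] [AddCommMonoid M] [Module R M]
    [TopologicalSpace M] {S : Submodule R M} (hS : IsClosed (S : Set M)) {f : ι → M} {a : M}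
    (hf : HasSum f a) (h : ∀ i, f i ∈ S) : a ∈ S :=
  hS.mem_of_tendsto hf (.of_forall fun _ => S.sum_mem fun i _ => h i)

theorem Function.extend_mk_left_apply {α β γ : Type*} [DecidableEq β] [Zero γ] (b : β)
    (u : α → γ) (p : α × β) :
    extend (fun a => (a, b)) u 0 p = if p.2 = b then u p.1 else 0 := by
  obtain ⟨a, b'⟩ := p
  by_cases h : b' = b
  · subst h
    simp [(Prod.mk_left_injective b').extend_apply]
  · rw [if_neg h, extend_apply']
    · rfl
    · rintro ⟨a', ha'⟩
      exact h (congrArg Prod.snd ha').symm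

namespace LinearPMap

section Topological

variable {R E F E' F' : Type*} [CommRing R] [TopologicalSpace R]
  [AddCommGroup E] [Module R E] [TopologicalSpace E] [ContinuousAdd E] [ContinuousSMul R E]
  [AddCommGroup F] [Module R F] [TopologicalSpace F] [ContinuousAdd F] [ContinuousSMul R F]
  [AddCommGroup E'] [Module R E'] [TopologicalSpace E'] [ContinuousAdd E'] [ContinuousSMul R E']
  [AddCommGroup F'] [Module R F'] [TopologicalSpace F'] [ContinuousAdd F'] [ContinuousSMul R F']

theorem IsClosed.closure_le {f g : E →ₗ.[R] F} (hg : g.IsClosed) (hfg : f ≤ g) : f.closure ≤ g :=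
  le_of_le_graph <| by
    rw [← (hg.isClosable.leIsClosable hfg).graph_closure_eq_closure_graph]
    exact Submodule.topologicalClosure_minimal _ (le_graph_of_le hfg) hg

theorem IsClosable.map_closure_graph_le {A : E →ₗ.[R] F} {B : E' →ₗ.[R] F'}
    (hA : A.IsClosable) (hB : B.IsClosable) (ι : E →L[R] E') (κ : F →L[R] F')
    (h : A.graph.map (ι.prodMap κ : E × F →ₗ[R] E' × F') ≤ B.graph) :
    A.closure.graph.map (ι.prodMap κ : E × F →ₗ[R] E' × F') ≤ B.closure.graph := by
  rw [← hA.graph_closure_eq_closure_graph, ← hB.graph_closure_eq_closure_graph]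
  exact (A.graph.topologicalClosure_map (ι.prodMap κ)).trans (Submodule.topologicalClosure_mono h)

theorem IsClosable.of_map_graph_le {A : E →ₗ.[R] F} {B : E' →ₗ.[R] F'} (hB : B.IsClosable)
    (ι : E →L[R] E') (κ : F →L[R] F') (hκ : Function.Injective κ)
    (h : A.graph.map (ι.prodMap κ : E × F →ₗ[R] E' × F') ≤ B.graph) : A.IsClosable := by
  refine ⟨A.graph.topologicalClosure.toLinearPMap,
    (Submodule.toLinearPMap_graph_eq _ fun x hx hx0 => hκ ?_).symm⟩
  have hmap : (ι x.1, κ x.2) ∈ B.closure.graph := by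
    rw [← hB.graph_closure_eq_closure_graph]
    exact (A.graph.topologicalClosure_map (ι.prodMap κ)).trans
      (Submodule.topologicalClosure_mono h) ⟨x, hx, rfl⟩
  rw [_root_.map_zero κ]
  exact B.closure.graph_fst_eq_zero_snd hmap (by rw [hx0, _root_.map_zero])

end Topological

section Inner

variable {𝕜 E F : Type*} [RCLike 𝕜] [NormedAddCommGroup E] [InnerProductSpace 𝕜 E]
  [NormedAddCommGroup F] [InnerProductSpace 𝕜 F]

theorem isFormalAdjoint_of_domain_eq_span {T : E →ₗ.[𝕜] F} {S : F →ₗ.[𝕜] E} {s : Set E}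
    (hs : T.domain = Submodule.span 𝕜 s)
    (h : ∀ x : T.domain, (x : E) ∈ s → ∀ y : S.domain, ⟪T x, y⟫_𝕜 = ⟪(x : E), S y⟫_𝕜) :
    T.IsFormalAdjoint S := by
  intro ⟨x, hx⟩ y
  have hxs : x ∈ Submodule.span 𝕜 s := hs ▸ hx
  induction hxs using Submodule.span_induction with
  | mem z hz => exact h ⟨z, hx⟩ hz y
  | zero => simp [show (⟨0, hx⟩ : T.domain) = 0 from rfl]
  | add z w hz hw ihz ihw =>
    rw [show (⟨z + w, hx⟩ : T.domain) = ⟨z, hs ▸ hz⟩ + ⟨w, hs ▸ hw⟩ from rfl, map_add,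
      inner_add_left, Submodule.coe_add, inner_add_left, ihz, ihw]
  | smul c z hz ihz =>
    rw [show (⟨c • z, hx⟩ : T.domain) = c • ⟨z, hs ▸ hz⟩ from rfl, map_smul,
      inner_smul_left, Submodule.coe_smul, inner_smul_left, ihz]

end Inner

end LinearPMap

section Memℓp

variable {α β E : Type*} [NormedAddCommGroup E] {p : ℝ≥0∞} {e : α → β}

theorem Memℓp.comp_injective {f : β → E} (hf : Memℓp f p) (he : e.Injective)
    (hp : 0 < p.toReal) : Memℓp (f ∘ e) p :=
  memℓp_gen ((hf.summable hp).comp_injective he)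

theorem Memℓp.extend_zero {u : α → E} (hu : Memℓp u p) (he : e.Injective) (hp : 0 < p.toReal) :
    Memℓp (Function.extend e u 0) p := by
  refine memℓp_gen ((he.summable_iff fun b hb => ?_).mp ?_)
  · rw [Function.extend_apply' _ _ _ (by simpa using hb)]
    simp [Real.zero_rpow hp.ne']
  · simpa [Function.comp_def, he.extend_apply] using hu.summable hp

end Memℓp

namespace lp

variable {α β : Type*} (𝕜 : Type*) {E : Type*} [NormedField 𝕜] [NormedAddCommGroup E]
  [NormedSpace 𝕜 E] {p : ℝ≥0∞} [Fact (1 ≤ p)] {e : α → β}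

def compL (he : e.Injective) (hp : 0 < p.toReal) :
    lp (fun _ : β => E) p →L[𝕜] lp (fun _ : α => E) p :=
  LinearMap.mkContinuous
    { toFun f := ⟨f ∘ e, (lp.memℓp f).comp_injective he hp⟩
      map_add' _ _ := rfl
      map_smul' _ _ := rfl } 1 fun f => by
    rw [one_mul]
    refine norm_le_of_forall_sum_le hp (norm_nonneg _) fun s => ?_
    calc ∑ a ∈ s, ‖f (e a)‖ ^ p.toReal = ∑ b ∈ s.map ⟨e, he⟩, ‖f b‖ ^ p.toReal :=
          (Finset.sum_map s ⟨e, he⟩ fun b => ‖f b‖ ^ p.toReal).symm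
      _ ≤ ‖f‖ ^ p.toReal := sum_rpow_le_norm_rpow hp f _

def extendL (he : e.Injective) (hp : 0 < p.toReal) :
    lp (fun _ : α => E) p →L[𝕜] lp (fun _ : β => E) p :=
  LinearMap.mkContinuous
    { toFun u := ⟨Function.extend e u 0, (lp.memℓp u).extend_zero he hp⟩
      map_add' u v := lp.ext <| by
        change Function.extend e ⇑(u + v) 0 = Function.extend e u 0 + Function.extend e v 0
        rw [lp.coeFn_add, ← Function.extend_add, add_zero]
      map_smul' c u := lp.ext <| by
        change Function.extend e ⇑(c • u) 0 = c • Function.extend e u 0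
        rw [lp.coeFn_smul, ← Function.extend_smul, smul_zero] } 1 fun u => by
    rw [one_mul]
    refine norm_le_of_forall_sum_le hp (norm_nonneg _) fun s => ?_
    calc ∑ b ∈ s, ‖Function.extend e u 0 b‖ ^ p.toReal
        = ∑ a ∈ s.preimage e he.injOn, ‖u a‖ ^ p.toReal := by
          rw [← Finset.sum_preimage e s he.injOn _ fun b _ hb => ?_]
          · simp [he.extend_apply]
          · rw [Function.extend_apply' _ _ _ (by simpa using hb)]
            simp [Real.zero_rpow hp.ne']
      _ ≤ ‖u‖ ^ p.toReal := sum_rpow_le_norm_rpow hp u _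

variable {𝕜}

theorem extendL_apply (he : e.Injective) (hp : 0 < p.toReal) (u : lp (fun _ : α => E) p) (b : β) :
    extendL 𝕜 he hp u b = Function.extend e u 0 b := rfl

theorem compL_extendL (he : e.Injective) (hp : 0 < p.toReal) (u : lp (fun _ : α => E) p) :
    compL 𝕜 he hp (extendL 𝕜 he hp u) = u :=
  lp.ext (funext (he.extend_apply u 0))

theorem extendL_single [DecidableEq α] [DecidableEq β] (he : e.Injective) (hp : 0 < p.toReal)
    (a : α) (x : E) : extendL 𝕜 he hp (lp.single p a x) = lp.single p (e a) x := by
  ext b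
  rw [extendL_apply, lp.coeFn_single, lp.single_apply]
  by_cases hb : ∃ a', e a' = b
  · obtain ⟨a', rfl⟩ := hb
    rw [he.extend_apply]
    by_cases h : a' = a
    · subst h; simp
    · simp [h, he.ne h]
  · rw [Function.extend_apply' _ _ _ hb, Pi.single_eq_of_ne (fun h => hb ⟨a, h.symm⟩)]
    rfl

end lp

theorem lp.sum_single_eq_self {α : Type*} [DecidableEq α] {E : α → Type*}
    [∀ i, NormedAddCommGroup (E i)] {p : ℝ≥0∞} [Fact (1 ≤ p)] (hp : p ≠ ⊤) (f : lp E p)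
    {s : Finset α} (hs : ∀ i ∉ s, f i = 0) :
    ∑ i ∈ s, lp.single p i (f i) = f :=
  (hasSum_sum_of_ne_finset_zero fun i hi => by rw [hs i hi, lp.single_zero]).unique
    (lp.hasSum_single hp f)

theorem lp.mem_graph_iff_of_apply {ι κ 𝕜 E : Type*} [NormedField 𝕜] [NormedAddCommGroup E]
    [NormedSpace 𝕜 E] {p : ℝ≥0∞} {A : lp (fun _ : ι => E) p →ₗ.[𝕜] lp (fun _ : κ => E) p}
    {P : lp (fun _ : ι => E) p → Prop} {L : (ι → E) → κ → E} (hdom : ∀ x, x ∈ A.domain ↔ P x)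
    (hact : ∀ x : A.domain, ∀ k, A x k = L (x : lp (fun _ : ι => E) p) k)
    {x : lp (fun _ : ι => E) p} {y : lp (fun _ : κ => E) p} :
    (x, y) ∈ A.graph ↔ P x ∧ ⇑y = L ⇑x := by
  refine ⟨fun h => ?_, fun ⟨hx, hy⟩ => ?_⟩
  · obtain ⟨z, rfl, rfl⟩ := A.mem_graph_iff.mp h
    exact ⟨(hdom _).mp z.2, funext (hact z)⟩
  · exact A.mem_graph_iff.mpr ⟨⟨x, (hdom x).mpr hx⟩, rfl, lp.ext (hy ▸ funext (hact _))⟩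

theorem jacobiAct_extend_mk_left (n : ℕ) (u : ℕ → ℂ) :
    jacobiAct (Function.extend (fun m => (m, n)) u 0) =
      Function.extend (fun m => (m, n)) (jacobiActRow n u) 0 := by
  funext ⟨m, k⟩
  simp only [jacobiAct, jacobiActRow, Function.extend_mk_left_apply]
  by_cases h : k = n <;> simp [h]

theorem jacobiAct_single_zero (n : ℕ) :
    jacobiAct (Pi.single (0, n) 1) = (beta 0 n : ℂ) • Pi.single (1, n) 1 := by
  funext ⟨a, b⟩
  simp only [jacobiAct, Pi.single_apply, Prod.mk.injEq, Pi.smul_apply, smul_eq_mul]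
  split_ifs <;> simp_all; omega

theorem jacobiAct_single_succ (m n : ℕ) :
    jacobiAct (Pi.single (m + 1, n) 1) =
      (beta (m + 1) n : ℂ) • Pi.single (m + 2, n) 1 + (beta m n : ℂ) • Pi.single (m, n) 1 := by
  funext ⟨a, b⟩
  simp only [jacobiAct, Pi.single_apply, Prod.mk.injEq, Pi.add_apply, Pi.smul_apply, smul_eq_mul]
  split_ifs <;> simp_all

def rowSection (n : ℕ) : H2 →L[ℂ] H1 := lp.compL ℂ (Prod.mk_left_injective n) (by norm_num)

def rowEmbed (n : ℕ) : H1 →L[ℂ] H2 := lp.extendL ℂ (Prod.mk_left_injective n) (by norm_num)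

theorem rowSection_apply (n : ℕ) (f : H2) (m : ℕ) : rowSection n f m = f (m, n) := rfl

theorem coe_rowEmbed (n : ℕ) (u : H1) :
    ⇑(rowEmbed n u) = Function.extend (fun m => (m, n)) ⇑u 0 := rfl

theorem rowSection_rowEmbed (n : ℕ) (u : H1) : rowSection n (rowEmbed n u) = u :=
  lp.compL_extendL _ _ u

theorem hasSum_rowEmbed_rowSection (f : H2) : HasSum (fun n => rowEmbed n (rowSection n f)) f := by
  have h := (Equiv.prodComm ℕ ℕ).hasSum_iff.mpr (lp.hasSum_single ENNReal.ofNat_ne_top f)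
  refine h.prod_fiberwise fun n => ?_
  simpa [rowEmbed, lp.extendL_single, rowSection_apply] using
    (rowEmbed n).hasSum (lp.hasSum_single ENNReal.ofNat_ne_top (rowSection n f))

namespace CalvoPicon

open LinearPMap

variable {T : H2 →ₗ.[ℂ] H2}
  (hTdom : ∀ f : H2, f ∈ T.domain ↔ {p : ℕ × ℕ | f p ≠ 0}.Finite)
  (hTact : ∀ f : T.domain, ∀ p : ℕ × ℕ, (T f : H2) p = jacobiAct (⇑(f : H2)) p)
  {J : ℕ → (H1 →ₗ.[ℂ] H1)}
  (hJdom : ∀ n : ℕ, ∀ u : H1, u ∈ (J n).domain ↔ {m : ℕ | u m ≠ 0}.Finite)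
  (hJact : ∀ n : ℕ, ∀ u : (J n).domain, ∀ m : ℕ,
    ((J n) u : H1) m = jacobiActRow n (⇑(u : H1)) m)

include hTdom

theorem single_mem_domain (q : ℕ × ℕ) (a : ℂ) : lp.single 2 q a ∈ T.domain :=
  (hTdom _).mpr ((Set.finite_singleton q).subset Pi.support_single_subset)

theorem domain_eq_span :
    T.domain = Submodule.span ℂ (Set.range fun q => lp.single 2 q (1 : ℂ)) := by
  refine le_antisymm (fun x hx => ?_) (Submodule.span_le.mpr ?_)
  · have hfin := (hTdom x).mp hx
    rw [← lp.sum_single_eq_self ENNReal.ofNat_ne_top x (s := hfin.toFinset) (by simp)]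
    refine Submodule.sum_mem _ fun q _ => ?_
    rw [show (lp.single 2 q (x q) : H2) = x q • lp.single 2 q 1 by
      rw [← lp.single_smul, smul_eq_mul, mul_one]]
    exact Submodule.smul_mem _ _ (Submodule.subset_span ⟨q, rfl⟩)
  · rintro _ ⟨q, rfl⟩
    exact single_mem_domain hTdom q 1

theorem dense_domain : Dense (T.domain : Set H2) := fun f =>
  mem_closure_of_tendsto (lp.hasSum_single ENNReal.ofNat_ne_top f)
    (.of_forall fun _ => Submodule.sum_mem _ fun q _ => single_mem_domain hTdom q _)

include hTact

theorem inner_apply_single (q : ℕ × ℕ) (y : H2) :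
    ⟪T ⟨lp.single 2 q 1, single_mem_domain hTdom q 1⟩, y⟫_ℂ = jacobiAct y q := by
  have hTq : ⇑(T ⟨lp.single 2 q 1, single_mem_domain hTdom q 1⟩ : H2) =
      jacobiAct (Pi.single q 1) :=
    funext (hTact _)
  obtain ⟨_ | m, n⟩ := q
  · have : (T ⟨_, single_mem_domain hTdom _ 1⟩ : H2) = (beta 0 n : ℂ) • lp.single 2 (1, n) 1 :=
      lp.ext (by rw [hTq, jacobiAct_single_zero]; rfl)
    simp [this, lp.inner_single_left, jacobiAct]
  · have : (T ⟨_, single_mem_domain hTdom _ 1⟩ : H2) =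
        (beta (m + 1) n : ℂ) • lp.single 2 (m + 2, n) 1 + (beta m n : ℂ) • lp.single 2 (m, n) 1 :=
      lp.ext (by rw [hTq, jacobiAct_single_succ]; rfl)
    simp [this, lp.inner_single_left, jacobiAct]

theorem isFormalAdjoint_self : T.IsFormalAdjoint T :=
  isFormalAdjoint_of_domain_eq_span (domain_eq_span hTdom) fun x ⟨q, hq⟩ y => by
    obtain rfl : x = ⟨lp.single 2 q 1, single_mem_domain hTdom q 1⟩ := Subtype.ext hq.symm
    rw [inner_apply_single hTdom hTact, ← hTact]
    simp [lp.inner_single_left]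

theorem le_adjoint : T ≤ T† := (isFormalAdjoint_self hTdom hTact).le_adjoint (dense_domain hTdom)

theorem isClosable : T.IsClosable :=
  (adjoint_isClosed (dense_domain hTdom)).isClosable.leIsClosable (le_adjoint hTdom hTact)

theorem closure_le_adjoint : T.closure ≤ T† :=
  (adjoint_isClosed (dense_domain hTdom)).closure_le (le_adjoint hTdom hTact)

theorem adjoint_apply_apply (g : T†.domain) (q : ℕ × ℕ) :
    (T† g : H2) q = jacobiAct (g : H2) q := by
  let e : T.domain := ⟨lp.single 2 q 1, single_mem_domain hTdom q 1⟩
  calc (T† g : H2) q = ⟪(e : H2), T† g⟫_ℂ := by simp [e, lp.inner_single_left]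
    _ = ⟪T e, g⟫_ℂ := ((adjoint_isFormalAdjoint (dense_domain hTdom)).symm e g).symm
    _ = jacobiAct g q := inner_apply_single hTdom hTact q g

theorem adjoint_apply_rowEmbed_rowSection (n : ℕ) (f z : T†.domain)
    (hz : (z : H2) = rowEmbed n (rowSection n f)) :
    T† z = rowEmbed n (rowSection n (T† f)) := by
  refine lp.ext (funext fun p => ?_)
  rw [adjoint_apply_apply hTdom hTact, hz, coe_rowEmbed, jacobiAct_extend_mk_left, coe_rowEmbed]
  congr 2
  exact funext fun m => (adjoint_apply_apply hTdom hTact f (m, n)).symm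

include hJdom hJact

theorem rowSection_prodMap_graph_le (n : ℕ) :
    T.graph.map ((rowSection n).prodMap (rowSection n) : H2 × H2 →ₗ[ℂ] H1 × H1) ≤ (J n).graph := by
  rintro _ ⟨⟨x, y⟩, hxy, rfl⟩
  obtain ⟨hx, hy⟩ := (lp.mem_graph_iff_of_apply hTdom hTact).mp hxy
  exact (lp.mem_graph_iff_of_apply (hJdom n) (hJact n)).mpr
    ⟨hx.preimage (Prod.mk_left_injective n).injOn, funext fun m => congrFun hy (m, n)⟩

theorem rowEmbed_prodMap_graph_le (n : ℕ) :
    (J n).graph.map ((rowEmbed n).prodMap (rowEmbed n) : H1 × H1 →ₗ[ℂ] H2 × H2) ≤ T.graph := by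
  rintro _ ⟨⟨u, v⟩, huv, rfl⟩
  obtain ⟨hu, hv⟩ := (lp.mem_graph_iff_of_apply (hJdom n) (hJact n)).mp huv
  refine (lp.mem_graph_iff_of_apply hTdom hTact).mpr
    ⟨(hu.image _).subset Function.support_extend_zero_subset, ?_⟩
  change ⇑(rowEmbed n v) = jacobiAct ⇑(rowEmbed n u)
  rw [coe_rowEmbed, coe_rowEmbed, hv, jacobiAct_extend_mk_left]

theorem isClosable_row (n : ℕ) : (J n).IsClosable :=
  (isClosable hTdom hTact).of_map_graph_le _ _
    (Function.LeftInverse.injective (rowSection_rowEmbed n))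
    (rowEmbed_prodMap_graph_le hTdom hTact hJdom hJact n)

theorem rowEmbed_mem_closure_graph (f : T†.domain) (n : ℕ)
    (hf : rowSection n f ∈ (J n).closure.domain) :
    (rowEmbed n (rowSection n f), rowEmbed n (rowSection n (T† f))) ∈ T.closure.graph := by
  have hmem : (rowEmbed n (rowSection n f), rowEmbed n ((J n).closure ⟨_, hf⟩)) ∈
      T.closure.graph :=
    (isClosable_row hTdom hTact hJdom hJact n).map_closure_graph_le (isClosable hTdom hTact) _ _
      (rowEmbed_prodMap_graph_le hTdom hTact hJdom hJact n)
      ⟨_, (J n).closure.mem_graph ⟨_, hf⟩, rfl⟩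
  obtain ⟨z, hz, hTz⟩ :=
    T†.mem_graph_iff.mp (le_graph_of_le (closure_le_adjoint hTdom hTact) hmem)
  dsimp only at hz hTz
  rwa [← hTz, adjoint_apply_rowEmbed_rowSection hTdom hTact n f z hz] at hmem

end CalvoPicon

/-- The closure `T** = cl T` of the Calvo–Picón operator `T` has domain
`{f ∈ D(T*) : ∀ n, the n-th section Pₙf belongs to the domain of the closure of Jₙ}`
and acts by `T* `. -/
theorem closure_of_CalvoPicon_T4_via_sections
    (T : H2 →ₗ.[ℂ] H2)
    (hTdom : ∀ f : H2, f ∈ T.domain ↔ {p : ℕ × ℕ | f p ≠ 0}.Finite)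
    (hTact : ∀ f : T.domain, ∀ p : ℕ × ℕ, (T f : H2) p = jacobiAct (⇑(f : H2)) p)
    (J : ℕ → (H1 →ₗ.[ℂ] H1))
    (hJdom : ∀ n : ℕ, ∀ u : H1, u ∈ (J n).domain ↔ {m : ℕ | u m ≠ 0}.Finite)
    (hJact : ∀ n : ℕ, ∀ u : (J n).domain, ∀ m : ℕ,
      ((J n) u : H1) m = jacobiActRow n (⇑(u : H1)) m) :
    (∀ f : H2, f ∈ T.closure.domain ↔
      (f ∈ T.adjoint.domain ∧
        ∀ n : ℕ, ∃ hs : Memℓp (fun m : ℕ => f (m, n)) 2,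
          (⟨fun m : ℕ => f (m, n), hs⟩ : H1) ∈ (J n).closure.domain)) ∧
    (∀ (f : H2) (hf : f ∈ T.closure.domain) (hf' : f ∈ T.adjoint.domain),
      T.closure ⟨f, hf⟩ = T.adjoint ⟨f, hf'⟩) := by
  have hT := CalvoPicon.isClosable hTdom hTact
  have hle := CalvoPicon.closure_le_adjoint hTdom hTact
  refine ⟨fun f => ⟨fun hf => ⟨hle.1 hf, fun n => ⟨(rowSection n f).2, ?_⟩⟩, fun ⟨hf, hsec⟩ => ?_⟩,
    fun f hf hf' => hle.2 rfl⟩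
  · exact LinearPMap.mem_domain_of_mem_graph <| hT.map_closure_graph_le
      (CalvoPicon.isClosable_row hTdom hTact hJdom hJact n) _ _
      (CalvoPicon.rowSection_prodMap_graph_le hTdom hTact hJdom hJact n)
      ⟨_, T.closure.mem_graph ⟨f, hf⟩, rfl⟩
  · have hsum := (hasSum_rowEmbed_rowSection f).prodMk
      (hasSum_rowEmbed_rowSection (T.adjoint ⟨f, hf⟩))
    refine LinearPMap.mem_domain_of_mem_graph
      (Submodule.mem_of_hasSum hT.closure_isClosed hsum fun n => ?_)
    obtain ⟨_, hfn⟩ := hsec n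
    exact CalvoPicon.rowEmbed_mem_closure_graph hTdom hTact hJdom hJact ⟨f, hf⟩ n hfn
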